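/- Let δ > 0. There exists σ₀ > 0, depending only on δ, such that the following holds. Let X be a δ-hyperbolic metric space in which, for all x,x' ∈ X and every l > 0, there is a (1,l)-quasi-geodesic joining x to x'; let G act on X by isometries, let σ ≥ σ₀, let R be a σ-rotation family, and let (W,N,V) be an extended windmill with W nonempty and L = ⟨N ∪ K_V⟩. Set A = { v ∈ v(R)∖V : d(v,W) ≤ 3σ/10 }, assume A is nonempty, let S = Hull(W ∪ A). Let m ≥ 0 and let g = h₁·h₂·⋯·h_m·u, where u ∈ L and, for each i ∈ {1,…,m}, there is (H_i, v_i) ∈ R with v_i ∈ A and h_i ∈ H_i∖{1}, and v_i ≠ v_{i+1} for 1 ≤ i ≤ m−1. If m ≥ 2, or if m = 1 and u ≠ 1, then for every y ∈ S one has d(g·y, y) ≥ σ − 440δ. -/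
import Mathlib


open Metric

universe u v

/-- The Gromov product `(y,z)_x = (d(y,x)+d(z,x)-d(y,z))/2`. -/
noncomputable def gp {X : Type u} [MetricSpace X] (x y z : X) : ℝ :=
  (dist y x + dist z x - dist y z) / 2

/-- `X` is `δ`-hyperbolic: the four point inequality. -/
def IsHyp (X : Type u) [MetricSpace X] (δ : ℝ) : Prop :=
  ∀ x y z t : X, min (gp t x y) (gp t y z) - δ ≤ gp t x z

/-- `γ` restricted to `[a,b]` is a `(1,l)`-quasi-geodesic. -/
def IsQG {X : Type u} [MetricSpace X] (l a b : ℝ) (γ : ℝ → X) : Prop :=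
  ∀ t ∈ Set.Icc a b, ∀ t' ∈ Set.Icc a b,
    dist (γ t) (γ t') ≤ |t - t'| ∧ |t - t'| ≤ dist (γ t) (γ t') + l

/-- Any two points of `X` are joined by a `(1,l)`-quasi-geodesic, for every `l > 0`. -/
def QGSpace (X : Type u) [MetricSpace X] : Prop :=
  ∀ x x' : X, ∀ l : ℝ, 0 < l →
    ∃ a b : ℝ, ∃ γ : ℝ → X, a ≤ b ∧ IsQG l a b γ ∧ γ a = x ∧ γ b = x'

/-- `Y` is `α`-quasi-convex. -/
def QConvex {X : Type u} [MetricSpace X] (α : ℝ) (Y : Set X) : Prop :=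
  ∀ x : X, ∀ y ∈ Y, ∀ y' ∈ Y, infDist x Y ≤ gp x y y' + α

/-- The hull of `Y`: the union of the images of all `(1,δ)`-quasi-geodesics defined on
compact intervals whose two endpoints lie in `Y`. -/
def hull {X : Type u} [MetricSpace X] (δ : ℝ) (Y : Set X) : Set X :=
  { z | ∃ a b : ℝ, ∃ γ : ℝ → X, a ≤ b ∧ IsQG δ a b γ ∧ γ a ∈ Y ∧ γ b ∈ Y ∧
      z ∈ γ '' Set.Icc a b }

/-- The `r`-neighborhood of a subset. -/
def nbhd {X : Type u} [MetricSpace X] (r : ℝ) (Z : Set X) : Set X :=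
  { x | infDist x Z ≤ r }

/-- A `σ`-rotation family: a nonempty set of pairs (rotation subgroup, apex). -/
def IsRotFam {X : Type u} [MetricSpace X] {G : Type v} [Group G] [MulAction G X]
    (σ : ℝ) (R : Set (Subgroup G × X)) : Prop :=
  R.Nonempty ∧
  (∀ p ∈ R, ∀ x : X, dist x p.2 ≤ σ / 10 → ∀ h ∈ p.1, h ≠ 1 →
      dist (h • x) x = 2 * dist p.2 x) ∧
  (∀ p ∈ R, ∀ q ∈ R, p ≠ q → σ ≤ dist p.2 q.2) ∧
  (∀ g : G, ∀ p ∈ R, (Subgroup.map (MulAut.conj g).toMonoidHom p.1, g • p.2) ∈ R)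

/-- The set of apices of a rotation family. -/
def apices {G : Type v} {X : Type u} [Group G] (R : Set (Subgroup G × X)) : Set X :=
  Prod.snd '' R

/-- The subgroup `K_Y` generated by all rotation subgroups whose apex lies in `Y`. -/
def rotSub {G : Type v} {X : Type u} [Group G] (R : Set (Subgroup G × X)) (Y : Set X) :
    Subgroup G :=
  ⨆ p ∈ { q ∈ R | q.2 ∈ Y }, p.1

/-- The orbit set `P • Z`. -/
def orbSet {G : Type v} {X : Type u} [Group G] [MulAction G X] (P : Subgroup G)
    (Z : Set X) : Set X :=
  { x | ∃ g ∈ P, ∃ z ∈ Z, x = g • z }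

/-- An extended windmill `(W, N, V)` for the rotation family `R`. -/
def IsExtWindmill {X : Type u} [MetricSpace X] {G : Type v} [Group G] [MulAction G X]
    (δ : ℝ) (R : Set (Subgroup G × X)) (W : Set X) (N : Subgroup G) (V : Set X) : Prop :=
  V ⊆ apices R ∧
  QConvex (2 * δ) W ∧
  (∀ g ∈ N ⊔ rotSub R V, ∀ w ∈ W, g • w ∈ W) ∧
  (∀ g ∈ N ⊔ rotSub R V, ∀ v ∈ V, g • v ∈ V) ∧
  (∀ p ∈ R, p.2 ∉ V → ∀ h ∈ p.1, h ≠ 1 → ∀ x ∈ W, ∀ x' ∈ W,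
      gp p.2 x (h • x') ≤ 100 * δ) ∧
  (∀ p ∈ R, p.2 ∉ V → ∀ g ∈ N ⊔ rotSub R V, g • p.2 = p.2 → g = 1)

section AuxGP

variable {X : Type u} [MetricSpace X]

theorem gp_comm' (x y z : X) : gp x y z = gp x z y := by
  unfold gp; rw [dist_comm y z]; ring

theorem gp_self_left' (x z : X) : gp x x z = 0 := by
  unfold gp; rw [dist_self, dist_comm z x]; ring

theorem gp_self_right' (x y : X) : gp x y x = 0 := by
  unfold gp; rw [dist_self]; ring

theorem gp_le_dist_left' (x y z : X) : gp x y z ≤ dist y x := by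
  unfold gp
  have h := dist_triangle z y x
  have h2 : dist z y = dist y z := dist_comm z y
  linarith

theorem gp_add' (a b c : X) : gp b a c + gp a b c = dist a b := by
  unfold gp
  rw [dist_comm b a, dist_comm c b, dist_comm c a]
  ring

theorem dist_eq_gp' (a b c : X) : dist a c = dist a b + dist b c - 2 * gp b a c := by
  unfold gp
  rw [dist_comm c b]
  ring

theorem gp_ge' (v w a : X) : dist a v - dist a w ≤ gp v w a := by
  unfold gp
  have h := dist_triangle a w v
  have h2 : dist w a = dist a w := dist_comm w a
  linarith

theorem gp_cut' {δ M : ℝ} (hyp : IsHyp X δ) {v w a c : X}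
    (h1 : gp v w c ≤ M) (h2 : M + δ < gp v w a) : gp v a c ≤ M + δ := by
  have H := hyp w a c v
  rw [min_def] at H
  split_ifs at H <;> linarith

theorem dist_le_gp_max' {δ : ℝ} (hyp : IsHyp X δ) {v y p q : X}
    (hy : gp y p q ≤ δ / 2) : dist v y ≤ max (gp v p y) (gp v q y) + 3 * δ / 2 := by
  have H := hyp p v q y
  have I1 : gp v p y + gp y p v = dist y v := by
    have := gp_add' y v p
    rw [gp_comm' v y p, gp_comm' y v p] at this
    exact this
  have I2 : gp v q y + gp y q v = dist y v := by
    have := gp_add' y v q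
    rw [gp_comm' v y q, gp_comm' y v q] at this
    exact this
  have hc : gp y v q = gp y q v := gp_comm' y v q
  rw [min_def] at H
  have hd : dist v y = dist y v := dist_comm v y
  split_ifs at H with hsplit
  · have h1 : gp y p v ≤ 3 * δ / 2 := by linarith
    have := le_max_left (gp v p y) (gp v q y)
    linarith
  · have h1 : gp y q v ≤ 3 * δ / 2 := by linarith
    have := le_max_right (gp v p y) (gp v q y)
    linarith

theorem gp_extend' {δ B : ℝ} (hyp : IsHyp X δ) (hδ : 0 ≤ δ) {v y p q c : X}
    (hy : gp y p q ≤ δ / 2) (hα : gp v p c ≤ B) (hβ : gp v q c ≤ B) :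
    gp v y c ≤ B + 5 * δ / 2 := by
  rcases le_or_gt (gp v y c) (B + δ) with hcase | hcase
  · linarith
  · have hp : gp v p y ≤ B + δ := by
      have H := hyp p y c v
      rw [min_def] at H
      split_ifs at H <;> linarith
    have hq : gp v q y ≤ B + δ := by
      have H := hyp q y c v
      rw [min_def] at H
      split_ifs at H <;> linarith
    have hd := dist_le_gp_max' hyp hy (v := v)
    have hle : gp v y c ≤ dist y v := gp_le_dist_left' v y c
    have hmax : max (gp v p y) (gp v q y) ≤ B + δ := max_le hp hq
    have hcm : dist y v = dist v y := dist_comm y v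
    linarith

end AuxGP

theorem hull_gp' {X : Type u} [MetricSpace X] {δ : ℝ} {Y : Set X} {y : X}
    (hy : y ∈ hull δ Y) : ∃ p ∈ Y, ∃ q ∈ Y, gp y p q ≤ δ / 2 := by
  obtain ⟨a, b, γ, hab, hQ, hpa, hqb, t, ht, rfl⟩ := hy
  refine ⟨γ a, hpa, γ b, hqb, ?_⟩
  have h1 := (hQ a ⟨le_refl a, hab⟩ t ht).1
  have h2 := (hQ t ht b ⟨hab, le_refl b⟩).1
  have h3 := (hQ a ⟨le_refl a, hab⟩ b ⟨hab, le_refl b⟩).2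
  have ht1 := ht.1
  have ht2 := ht.2
  have e1 : |a - t| = t - a := by rw [abs_sub_comm]; exact abs_of_nonneg (by linarith)
  have e2 : |t - b| = b - t := by rw [abs_sub_comm]; exact abs_of_nonneg (by linarith)
  have e3 : |a - b| = b - a := by rw [abs_sub_comm]; exact abs_of_nonneg (by linarith)
  rw [e1] at h1
  rw [e2] at h2
  rw [e3] at h3
  unfold gp
  have hc : dist (γ b) (γ t) = dist (γ t) (γ b) := dist_comm _ _
  linarith

theorem chain_est' {X : Type u} [MetricSpace X] {δ K σ' : ℝ} (hyp : IsHyp X δ)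
    (hδ : 0 ≤ δ) (hσ : 2 * K + 2 * δ < σ') (n : ℕ) (hn : 2 ≤ n) (x : ℕ → X)
    (edges : ∀ i, 1 ≤ i → i + 1 ≤ n → σ' ≤ dist (x i) (x (i + 1)))
    (prods : ∀ i, 1 ≤ i → i ≤ n → gp (x i) (x (i - 1)) (x (i + 1)) ≤ K) :
    σ' - 4 * (K + δ) ≤ dist (x 0) (x (n + 1)) := by
  have inv : ∀ j, j + 1 ≤ n → gp (x (n - j)) (x (n - j - 1)) (x (n + 1)) ≤ K + δ := by
    intro j
    induction j with
    | zero =>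
      intro _
      have := prods n (by omega) le_rfl
      simpa using le_trans this (by linarith)
    | succ j ih =>
      intro hj
      have hprev : gp (x (n - j)) (x (n - j - 1)) (x (n + 1)) ≤ K + δ := ih (by omega)
      set i : ℕ := n - j - 1 with hidef
      have hi1 : 1 ≤ i := by omega
      have hin : i + 1 ≤ n := by omega
      have e1 : n - j = i + 1 := by omega
      rw [e1] at hprev
      -- hprev : gp (x (i+1)) (x i) (x (n+1)) ≤ K + δ
      have hsum : gp (x i) (x (i + 1)) (x (n + 1)) + gp (x (i + 1)) (x i) (x (n + 1))
          = dist (x (i + 1)) (x i) := gp_add' _ _ _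
      have hedge := edges i hi1 hin
      have hcm : dist (x (i + 1)) (x i) = dist (x i) (x (i + 1)) := dist_comm _ _
      have hkey : σ' - (K + δ) ≤ gp (x i) (x (n + 1)) (x (i + 1)) := by
        rw [gp_comm']
        linarith
      have H := hyp (x (i - 1)) (x (n + 1)) (x (i + 1)) (x i)
      have hpi := prods i hi1 (by omega)
      have goal : gp (x i) (x (i - 1)) (x (n + 1)) ≤ K + δ := by
        rw [min_def] at H
        split_ifs at H <;> linarith
      have e2 : n - (j + 1) = i := by omega
      rw [e2]
      exact goal
  have I0 : gp (x 1) (x 0) (x (n + 1)) ≤ K + δ := by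
    have := inv (n - 1) (by omega)
    rw [show n - (n - 1) = 1 by omega] at this
    exact this
  have I1 : gp (x 2) (x 1) (x (n + 1)) ≤ K + δ := by
    have := inv (n - 2) (by omega)
    rw [show n - (n - 2) = 2 by omega] at this
    exact this
  have D1 : σ' - 2 * (K + δ) ≤ dist (x 1) (x (n + 1)) := by
    have hde := dist_eq_gp' (x 1) (x 2) (x (n + 1))
    have he := edges 1 le_rfl hn
    have hd0 : (0:ℝ) ≤ dist (x 2) (x (n + 1)) := dist_nonneg
    linarith
  have hde0 := dist_eq_gp' (x 0) (x 1) (x (n + 1))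
  have hd1 : (0:ℝ) ≤ dist (x 0) (x 1) := dist_nonneg
  linarith

/-- Elements of `L'` with at least one rotation (and not a single pure rotation)
move every point of the sail `S` by at least `σ - 440δ`. -/
theorem windmill_pretranslation (δ : ℝ) (hδ : 0 < δ) :
    ∃ σ₀ : ℝ, 0 < σ₀ ∧
      ∀ (X : Type u) [MetricSpace X] (G : Type v) [Group G] [MulAction G X],
        (∀ g : G, Isometry fun x : X => g • x) →
        IsHyp X δ → QGSpace X →
        ∀ σ : ℝ, σ₀ ≤ σ → ∀ R : Set (Subgroup G × X), IsRotFam σ R →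
          ∀ (W : Set X) (N : Subgroup G) (V : Set X),
            W.Nonempty → IsExtWindmill δ R W N V →
            ∀ A : Set X,
              A = { v | v ∈ apices R ∧ v ∉ V ∧ infDist v W ≤ 3 * σ / 10 } →
              A.Nonempty →
              ∀ S : Set X, S = hull δ (W ∪ A) →
                ∀ (m : ℕ) (h : ℕ → G) (u : G) (P : ℕ → Subgroup G × X),
                  u ∈ N ⊔ rotSub R V →
                  (∀ i : ℕ, 1 ≤ i → i ≤ m →
                    P i ∈ R ∧ (P i).2 ∈ A ∧ h i ∈ (P i).1 ∧ h i ≠ 1) →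
                  (∀ i : ℕ, 1 ≤ i → i + 1 ≤ m → (P i).2 ≠ (P (i + 1)).2) →
                  ∀ g : G, g = ((List.range m).map fun i => h (i + 1)).prod * u →
                  (2 ≤ m ∨ (m = 1 ∧ u ≠ 1)) →
                  ∀ y ∈ S, σ - 440 * δ ≤ dist (g • y) y := by
  refine ⟨1000 * δ, by positivity, ?_⟩
  intro X _ G _ _ hiso hyp _hQG σ hσ R hR W N V hWne hwind A hAdef hAne S hSdef
    m h u P hu hP hPne g hg hm y hyS
  have hσδ : 1000 * δ ≤ σ := hσ
  have hσ0 : 0 < σ := by linarith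
  have hdist : ∀ (g : G) (a b : X), dist (g • a) (g • b) = dist a b :=
    fun g a b => (hiso g).dist_eq a b
  have hgp : ∀ (g : G) (v a b : X), gp (g • v) (g • a) (g • b) = gp v a b := by
    intro g v a b
    unfold gp
    rw [hdist, hdist, hdist]
  have hfix : ∀ p ∈ R, ∀ hh ∈ p.1, hh ≠ 1 → hh • p.2 = p.2 := by
    intro p hp hh hhm hhne
    have h1 := hR.2.1 p hp p.2 (by rw [dist_self]; linarith) hh hhm hhne
    rw [dist_self] at h1
    have : dist (hh • p.2) p.2 = 0 := by linarith
    exact dist_eq_zero.mp this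
  have hsep : ∀ p ∈ R, ∀ q ∈ R, p.2 ≠ q.2 → σ ≤ dist p.2 q.2 :=
    fun p hp q hq hne => hR.2.2.1 p hp q hq (fun e => hne (congrArg Prod.snd e))
  have hAmem : ∀ v ∈ A, v ∈ apices R ∧ v ∉ V ∧ infDist v W ≤ 3 * σ / 10 := by
    intro v hv
    rw [hAdef] at hv
    exact hv
  have hWinv := hwind.2.2.1
  have hVinv := hwind.2.2.2.1
  have hW3 := hwind.2.2.2.2.1
  have hW4 := hwind.2.2.2.2.2
  -- E2 : one argument in W ∪ A, other in W
  have E2 : ∀ p ∈ R, p.2 ∉ V → ∀ hh ∈ p.1, hh ≠ 1 → ∀ a ∈ W ∪ A, ∀ b ∈ W,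
      gp p.2 a (hh • b) ≤ 101 * δ := by
    intro p hp hpV hh hhm hhne a ha b hb
    rcases ha with haW | haA
    · linarith [hW3 p hp hpV hh hhm hhne a haW b hb]
    · by_cases hav : a = p.2
      · rw [hav, gp_self_left']
        positivity
      · obtain ⟨hap, _, hadist⟩ := hAmem a haA
        obtain ⟨q, hq, hq2⟩ := hap
        have hqa : σ ≤ dist a p.2 := by
          have := hsep q hq p hp (by rw [hq2]; exact hav)
          rwa [hq2] at this
        obtain ⟨w, hwW, hwd⟩ : ∃ w ∈ W, dist a w < 3 * σ / 10 + δ :=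
          (Metric.infDist_lt_iff hWne).mp (by linarith)
        have h1 : gp p.2 w (hh • b) ≤ 100 * δ := hW3 p hp hpV hh hhm hhne w hwW b hb
        have h2 : 100 * δ + δ < gp p.2 w a := by
          have := gp_ge' p.2 w a
          linarith
        linarith [gp_cut' hyp h1 h2]
  -- E3 : both arguments in W ∪ A
  have E3 : ∀ p ∈ R, p.2 ∉ V → ∀ hh ∈ p.1, hh ≠ 1 → ∀ a ∈ W ∪ A, ∀ b ∈ W ∪ A,
      gp p.2 a (hh • b) ≤ 102 * δ := by
    intro p hp hpV hh hhm hhne a ha b hb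
    rcases hb with hbW | hbA
    · linarith [E2 p hp hpV hh hhm hhne a ha b hbW]
    · by_cases hbv : b = p.2
      · rw [hbv, hfix p hp hh hhm hhne, gp_self_right']
        positivity
      · obtain ⟨hbp, _, hbdist⟩ := hAmem b hbA
        obtain ⟨q, hq, hq2⟩ := hbp
        have hqb : σ ≤ dist b p.2 := by
          have := hsep q hq p hp (by rw [hq2]; exact hbv)
          rwa [hq2] at this
        obtain ⟨w, hwW, hwd⟩ : ∃ w ∈ W, dist b w < 3 * σ / 10 + δ :=
          (Metric.infDist_lt_iff hWne).mp (by linarith)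
        rw [gp_comm']
        have h1 : gp p.2 (hh • w) a ≤ 101 * δ := by
          rw [gp_comm']
          exact E2 p hp hpV hh hhm hhne a ha w hwW
        have h2 : 101 * δ + δ < gp p.2 (hh • w) (hh • b) := by
          have e : gp p.2 (hh • w) (hh • b) = gp p.2 w b := by
            conv_lhs => rw [← hfix p hp hh hhm hhne]
            exact hgp hh p.2 w b
          rw [e]
          have := gp_ge' p.2 w b
          linarith
        linarith [gp_cut' hyp h1 h2]
  have hullpts : ∀ z ∈ S, ∃ p ∈ W ∪ A, ∃ q ∈ W ∪ A, gp z p q ≤ δ / 2 := by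
    intro z hz
    rw [hSdef] at hz
    exact hull_gp' hz
  -- E4 : first argument in S
  have E4 : ∀ p ∈ R, p.2 ∉ V → ∀ hh ∈ p.1, hh ≠ 1 → ∀ a ∈ S, ∀ b ∈ W ∪ A,
      gp p.2 a (hh • b) ≤ 102 * δ + 5 * δ / 2 := by
    intro p hp hpV hh hhm hhne a haS b hb
    obtain ⟨p₁, hp₁, q₁, hq₁, hgp₁⟩ := hullpts a haS
    exact gp_extend' hyp hδ.le hgp₁ (E3 p hp hpV hh hhm hhne p₁ hp₁ b hb)
      (E3 p hp hpV hh hhm hhne q₁ hq₁ b hb)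
  -- E5 : both arguments in S
  have E5 : ∀ p ∈ R, p.2 ∉ V → ∀ hh ∈ p.1, hh ≠ 1 → ∀ a ∈ S, ∀ b ∈ S,
      gp p.2 a (hh • b) ≤ 107 * δ := by
    intro p hp hpV hh hhm hhne a haS b hbS
    obtain ⟨p₁, hp₁, q₁, hq₁, hgp₁⟩ := hullpts b hbS
    have hy : gp (hh • b) (hh • p₁) (hh • q₁) ≤ δ / 2 := by
      rw [hgp hh b p₁ q₁]
      exact hgp₁
    have hα : gp p.2 (hh • p₁) a ≤ 102 * δ + 5 * δ / 2 := by
      rw [gp_comm']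
      exact E4 p hp hpV hh hhm hhne a haS p₁ hp₁
    have hβ : gp p.2 (hh • q₁) a ≤ 102 * δ + 5 * δ / 2 := by
      rw [gp_comm']
      exact E4 p hp hpV hh hhm hhne a haS q₁ hq₁
    have := gp_extend' hyp hδ.le hy hα hβ
    rw [gp_comm']
    linarith
  -- A ⊆ S
  have hAS : ∀ v ∈ A, v ∈ S := by
    intro v hv
    rw [hSdef]
    refine ⟨0, 0, fun _ => v, le_rfl, ?_, Or.inr hv, Or.inr hv, 0, ⟨le_rfl, le_rfl⟩, rfl⟩
    intro t ht t' ht'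
    have h1 : t = 0 := le_antisymm ht.2 ht.1
    have h2 : t' = 0 := le_antisymm ht'.2 ht'.1
    subst h1; subst h2
    simp [dist_self]
    linarith
  -- W ∪ A and S are invariant under L
  have hWAinv : ∀ g₀ ∈ N ⊔ rotSub R V, ∀ z ∈ W ∪ A, g₀ • z ∈ W ∪ A := by
    intro g₀ hg₀ z hz
    rcases hz with hzW | hzA
    · exact Or.inl (hWinv g₀ hg₀ z hzW)
    · refine Or.inr ?_
      obtain ⟨hzp, hznV, hzd⟩ := hAmem z hzA
      rw [hAdef]
      refine ⟨?_, ?_, ?_⟩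
      · obtain ⟨q, hq, hq2⟩ := hzp
        exact ⟨_, hR.2.2.2 g₀ q hq, by show g₀ • q.2 = g₀ • z; rw [hq2]⟩
      · intro hVmem
        have h1 : g₀⁻¹ • (g₀ • z) ∈ V := hVinv g₀⁻¹ (inv_mem hg₀) _ hVmem
        rw [inv_smul_smul] at h1
        exact hznV h1
      · by_contra hcon
        push_neg at hcon
        set ε := (infDist (g₀ • z) W - 3 * σ / 10) / 2 with hεdef
        have hε : 0 < ε := by simp only [hεdef]; linarith
        obtain ⟨w, hwW, hwd⟩ : ∃ w ∈ W, dist z w < 3 * σ / 10 + ε :=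
          (Metric.infDist_lt_iff hWne).mp (by linarith)
        have h1 : infDist (g₀ • z) W ≤ dist (g₀ • z) (g₀ • w) :=
          Metric.infDist_le_dist_of_mem (hWinv g₀ hg₀ w hwW)
        rw [hdist] at h1
        simp only [hεdef] at hwd h1
        linarith
  have hSinv : ∀ g₀ ∈ N ⊔ rotSub R V, ∀ z ∈ S, g₀ • z ∈ S := by
    intro g₀ hg₀ z hz
    rw [hSdef] at hz ⊢
    obtain ⟨a, b, γ, hab, hQ, hpa, hqb, t, ht, rfl⟩ := hz
    refine ⟨a, b, fun s => g₀ • γ s, hab, ?_, hWAinv g₀ hg₀ _ hpa, hWAinv g₀ hg₀ _ hqb,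
      t, ht, rfl⟩
    intro t1 ht1 t2 ht2
    simp only []
    rw [hdist]
    exact hQ t1 ht1 t2 ht2
  -- partial products
  set pp : ℕ → G := fun k => ((List.range k).map fun i => h (i + 1)).prod with hppdef
  have pp0 : pp 0 = 1 := by simp [hppdef]
  have ppsucc : ∀ k, pp (k + 1) = pp k * h (k + 1) := by
    intro k
    simp [hppdef, List.range_succ]
  have hgpp : g = pp m * u := hg
  rcases hm with hm2 | ⟨hm1, hune⟩
  · -- case m ≥ 2
    set x : ℕ → X := fun i => if i = 0 then y else if i ≤ m then pp (i - 1) • (P i).2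
      else g • y with hxdef
    have hx0 : x 0 = y := by simp [hxdef]
    have hxi : ∀ i, 1 ≤ i → i ≤ m → x i = pp (i - 1) • (P i).2 := by
      intro i h1 h2
      rw [hxdef]
      dsimp only
      rw [if_neg (by omega), if_pos h2]
    have hxm : x (m + 1) = g • y := by
      rw [hxdef]
      dsimp only
      rw [if_neg (by omega), if_neg (by omega)]
    have edges : ∀ i, 1 ≤ i → i + 1 ≤ m → σ ≤ dist (x i) (x (i + 1)) := by
      intro i h1 h2
      obtain ⟨hpiR, hpiA, hhim, hhine⟩ := hP i h1 (by omega)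
      obtain ⟨hpR', _, _, _⟩ := hP (i + 1) (by omega) h2
      rw [hxi i h1 (by omega), hxi (i + 1) (by omega) h2]
      have e0 : i - 1 + 1 = i := by omega
      have epp : pp (i + 1 - 1) = pp (i - 1) * h i := by
        rw [show i + 1 - 1 = (i - 1) + 1 by omega, ppsucc, e0]
      rw [epp, mul_smul, hdist]
      have efix : h i • (P i).2 = (P i).2 := hfix (P i) hpiR (h i) hhim hhine
      calc σ ≤ dist (P i).2 (P (i + 1)).2 := hsep (P i) hpiR (P (i + 1)) hpR' (hPne i h1 h2)
        _ = dist (h i • (P i).2) (h i • (P (i + 1)).2) := (hdist _ _ _).symm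
        _ = dist (P i).2 (h i • (P (i + 1)).2) := by rw [efix]
    have prods : ∀ i, 1 ≤ i → i ≤ m → gp (x i) (x (i - 1)) (x (i + 1)) ≤ 107 * δ := by
      intro i h1 h2
      obtain ⟨hpiR, hpiA, hhim, hhine⟩ := hP i h1 h2
      obtain ⟨_, hvinV, _⟩ := hAmem _ hpiA
      have ha' : ∃ a', x (i - 1) = pp (i - 1) • a' ∧ a' ∈ S := by
        by_cases hi1 : i = 1
        · refine ⟨y, ?_, hyS⟩
          rw [show i - 1 = 0 by omega, hx0, pp0, one_smul]
        · obtain ⟨hpR'', hpA'', hhm'', hhne''⟩ := hP (i - 1) (by omega) (by omega)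
          refine ⟨(P (i - 1)).2, ?_, hAS _ hpA''⟩
          rw [hxi (i - 1) (by omega) (by omega)]
          have e : pp (i - 1) = pp (i - 1 - 1) * h (i - 1) := by
            rw [show i - 1 = (i - 1 - 1) + 1 by omega, ppsucc, show i - 1 - 1 + 1 = i - 1 by omega]
          rw [e, mul_smul, hfix (P (i - 1)) hpR'' (h (i - 1)) hhm'' hhne'']
      have hc' : ∃ b', x (i + 1) = pp (i - 1) • (h i • b') ∧ b' ∈ S := by
        by_cases him : i = m
        · refine ⟨u • y, ?_, hSinv u hu y hyS⟩
          rw [him, hxm, hgpp]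
          rw [show pp m = pp (m - 1) * h m by
            rw [show m = (m - 1) + 1 by omega, ppsucc, show m - 1 + 1 = m by omega]]
          rw [mul_assoc, mul_smul, mul_smul]
        · obtain ⟨hpR₃, hpA₃, _, _⟩ := hP (i + 1) (by omega) (by omega)
          refine ⟨(P (i + 1)).2, ?_, hAS _ hpA₃⟩
          rw [hxi (i + 1) (by omega) (by omega)]
          rw [show i + 1 - 1 = (i - 1) + 1 by omega, ppsucc, show i - 1 + 1 = i by omega,
            mul_smul]
      obtain ⟨a', hxa, haS'⟩ := ha'
      obtain ⟨b', hxb, hbS'⟩ := hc'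
      rw [hxi i h1 h2, hxa, hxb, hgp]
      exact E5 (P i) hpiR hvinV (h i) hhim hhine a' haS' b' hbS'
    have hchain := chain_est' hyp hδ.le
      (by linarith : 2 * (107 * δ) + 2 * δ < σ) m hm2 x edges prods
    rw [hx0, hxm, dist_comm] at hchain
    linarith
  · -- case m = 1
    subst hm1
    obtain ⟨hp1R, hp1A, hh1m, hh1ne⟩ := hP 1 le_rfl le_rfl
    obtain ⟨hv₁ap, hv₁nV, _⟩ := hAmem _ hp1A
    have hg1 : g = h 1 * u := by
      rw [hgpp, show (1:ℕ) = 0 + 1 from rfl, ppsucc, pp0, one_mul]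
    have huv₁ : u • (P 1).2 ≠ (P 1).2 := fun e => hune (hW4 (P 1) hp1R hv₁nV u hu e)
    have huv₁d : σ ≤ dist (u • (P 1).2) (P 1).2 := by
      have hpair := hR.2.2.2 u (P 1) hp1R
      exact hsep _ hpair _ hp1R huv₁
    have hgpb : gp (P 1).2 y (h 1 • (u • y)) ≤ 107 * δ :=
      E5 (P 1) hp1R hv₁nV (h 1) hh1m hh1ne y hyS (u • y) (hSinv u hu y hyS)
    have hid : dist (g • y) y
        = dist (g • y) (P 1).2 + dist (P 1).2 y - 2 * gp (P 1).2 (g • y) y :=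
      dist_eq_gp' _ _ _
    have hgy : g • y = h 1 • (u • y) := by rw [hg1, mul_smul]
    have hd1 : dist (g • y) (P 1).2 = dist (u • y) (P 1).2 := by
      rw [hgy]
      calc dist (h 1 • (u • y)) (P 1).2
          = dist (h 1 • (u • y)) (h 1 • (P 1).2) := by
            rw [hfix (P 1) hp1R (h 1) hh1m hh1ne]
        _ = dist (u • y) (P 1).2 := hdist _ _ _
    have htri : dist (u • (P 1).2) (P 1).2
        ≤ dist (u • (P 1).2) (u • y) + dist (u • y) (P 1).2 := dist_triangle _ _ _
    have he : dist (u • (P 1).2) (u • y) = dist (P 1).2 y := hdist u _ _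
    have hgpc : gp (P 1).2 (g • y) y ≤ 107 * δ := by
      rw [gp_comm', hgy]
      exact hgpb
    linarith
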